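/- Let τ > 0, Θ ∈ ℝ^{n×n}, and let μ_1, μ_2 ∈ S (strictly positive probability vectors). Consider the entropy-regularized optimal transport problem min_{M ∈ Π(μ_1, μ_2)} ⟨Θ, M⟩ + τ Σ_{k,l} M_{kl} log M_{kl} (with the convention 0 log 0 = 0). Then a minimizer M̄ exists and is unique; M̄ has strictly positive entries; and there exist vectors v_1, v_2 ∈ ℝ^n with strictly positive entries such that M̄ = Diag(v_1) K Diag(v_2), where K = exp(−Θ/τ) entrywise and Diag(v) is the diagonal matrix with diagonal v. The pair (v_1, v_2) is unique up to replacing (v_1, v_2) by (λv_1, λ^{-1}v_2) for λ > 0. -/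

import Mathlib

open Finset Matrix

noncomputable section

/-- The relative interior `S` of the probability simplex. -/
def Spos (n : ℕ) : Set (Fin n → ℝ) := {p | (∀ k, 0 < p k) ∧ ∑ k, p k = 1}

/-- Coupling matrices Π(p,q) with marginals `p` and `q`. -/
def couplings {n : ℕ} (p q : Fin n → ℝ) : Set (Matrix (Fin n) (Fin n) ℝ) :=
  {M | (∀ k l, 0 ≤ M k l) ∧ (∀ k, ∑ l, M k l = p k) ∧ (∀ l, ∑ k, M k l = q l)}

/-- Frobenius inner product on matrices. -/
def mdot {n : ℕ} (A B : Matrix (Fin n) (Fin n) ℝ) : ℝ := ∑ k, ∑ l, A k l * B k l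

/-- The entropy-regularized transport objective
`⟨Θ, M⟩ + τ Σ_{k,l} M_{kl} log M_{kl}` (with the convention 0·log 0 = 0,
automatic since `Real.log 0 = 0`). -/
def entObj {n : ℕ} (Θ : Matrix (Fin n) (Fin n) ℝ) (τ : ℝ)
    (M : Matrix (Fin n) (Fin n) ℝ) : ℝ :=
  mdot Θ M + τ * ∑ k, ∑ l, M k l * Real.log (M k l)

/-!
Existence follows from compactness of `Π(μ₁, μ₂)`, uniqueness from strict convexity of
`x ↦ x log x`. A minimizer has no zero entry: mixing in a small multiple `t` of the product
coupling changes the objective by `O(t) + τ t μ₁ₖ μ₂ₗ log t < 0` for every vanishing entry `(k,l)`.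
At a positive minimizer the objective is differentiable along all directions `u vᵀ` with
`∑ u = ∑ v = 0`, which keep the marginals; the vanishing of these derivatives says that
`log M̄ + Θ/τ` has vanishing cross differences, i.e. is of the form `a k + b l`, so
`M̄ = Diag(exp a) K Diag(exp b)`. Two such scalings satisfy `v₁ₖ v₂ₗ = w₁ₖ w₂ₗ`.
-/

open Filter Topology

section Scaling

variable {m n : Type*} [Fintype m] [Fintype n] [DecidableEq m] [DecidableEq n]

lemma diagonal_mul_mul_diagonal_apply (v : m → ℝ) (K : Matrix m n ℝ) (w : n → ℝ) (k : m) (l : n) :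
    (diagonal v * K * diagonal w) k l = v k * K k l * w l := by
  rw [mul_diagonal, diagonal_mul]

lemma exists_diagonal_scaling_of_cross_eq [Nonempty m] [Nonempty n] (K L : Matrix m n ℝ)
    (hL : ∀ a a' b b', L a b + L a' b' = L a b' + L a' b) :
    ∃ (v : m → ℝ) (w : n → ℝ), (∀ k, 0 < v k) ∧ (∀ l, 0 < w l) ∧
      (Matrix.of fun k l => Real.exp (L k l) * K k l) = diagonal v * K * diagonal w := by
  obtain ⟨i₀⟩ := ‹Nonempty m›
  obtain ⟨j₀⟩ := ‹Nonempty n›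
  refine ⟨fun k => Real.exp (L k j₀), fun l => Real.exp (L i₀ l - L i₀ j₀),
    fun _ => Real.exp_pos _, fun _ => Real.exp_pos _, ?_⟩
  ext k l
  rw [diagonal_mul_mul_diagonal_apply, of_apply, mul_right_comm, ← Real.exp_add]
  congr 2
  linarith [hL k i₀ l j₀]

lemma sum_single_sub_single {ι : Type*} [Fintype ι] [DecidableEq ι] (i i' : ι) :
    ∑ j, (Pi.single i 1 - Pi.single i' 1 : ι → ℝ) j = 0 := by
  simp [Finset.sum_sub_distrib]

lemma cross_eq_of_forall_sum_sum_mul_eq_zero {G : Matrix m n ℝ}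
    (hG : ∀ D : Matrix m n ℝ, (∀ k, ∑ l, D k l = 0) → (∀ l, ∑ k, D k l = 0) →
      ∑ k, ∑ l, G k l * D k l = 0) (a a' : m) (b b' : n) :
    G a b + G a' b' = G a b' + G a' b := by
  have := hG (vecMulVec (Pi.single a 1 - Pi.single a' 1) (Pi.single b 1 - Pi.single b' 1))
    (fun k => by simp only [vecMulVec_apply, ← Finset.mul_sum, sum_single_sub_single, mul_zero])
    (fun l => by simp only [vecMulVec_apply, ← Finset.sum_mul, sum_single_sub_single, zero_mul])
  simp only [vecMulVec_apply, Pi.sub_apply, Pi.single_apply, mul_sub, mul_ite, mul_one, mul_zero,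
    Finset.sum_sub_distrib, Finset.sum_ite_eq', Finset.mem_univ, if_true] at this
  linarith

lemma diagonal_scaling_unique [Nonempty m] [Nonempty n] {K : Matrix m n ℝ}
    (hK : ∀ k l, K k l ≠ 0) {v₁ w₁ : m → ℝ} {v₂ w₂ : n → ℝ} (hv₁ : ∀ k, 0 < v₁ k)
    (hw₁ : ∀ k, 0 < w₁ k) (hw₂ : ∀ l, w₂ l ≠ 0)
    (h : diagonal v₁ * K * diagonal v₂ = diagonal w₁ * K * diagonal w₂) :
    ∃ lam : ℝ, 0 < lam ∧ w₁ = (fun k => lam * v₁ k) ∧ w₂ = fun l => v₂ l / lam := by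
  obtain ⟨i₀⟩ := ‹Nonempty m›
  obtain ⟨j₀⟩ := ‹Nonempty n›
  have hprod : ∀ k l, w₁ k * w₂ l = v₁ k * v₂ l := by
    intro k l
    have := congrFun (congrFun h k) l
    rw [diagonal_mul_mul_diagonal_apply, diagonal_mul_mul_diagonal_apply] at this
    apply mul_left_cancel₀ (hK k l)
    linear_combination -this
  refine ⟨w₁ i₀ / v₁ i₀, div_pos (hw₁ i₀) (hv₁ i₀), funext fun k => ?_, funext fun l => ?_⟩
  · rw [div_mul_eq_mul_div, eq_div_iff (hv₁ i₀).ne']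
    apply mul_right_cancel₀ (hw₂ j₀)
    linear_combination v₁ i₀ * hprod k j₀ - v₁ k * hprod i₀ j₀
  · rw [div_div_eq_mul_div, eq_div_iff (hw₁ i₀).ne']
    linear_combination hprod i₀ l

end Scaling

lemma StrictConvexOn.sum_pi {ι E : Type*} [Fintype ι] [AddCommGroup E] [Module ℝ E]
    {s : Set E} {f : ι → E → ℝ} (hf : ∀ i, StrictConvexOn ℝ s (f i)) :
    StrictConvexOn ℝ {x : ι → E | ∀ i, x i ∈ s} fun x => ∑ i, f i (x i) := by
  refine ⟨fun x hx y hy a b ha hb hab i => (hf i).1 (hx i) (hy i) ha hb hab,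
    fun x hx y hy hxy a b ha hb hab => ?_⟩
  obtain ⟨i, hi⟩ := Function.ne_iff.1 hxy
  simp only [Pi.add_apply, Pi.smul_apply, smul_eq_mul, Finset.mul_sum, ← Finset.sum_add_distrib]
  exact Finset.sum_lt_sum (fun j _ => (hf j).convexOn.2 (hx j) (hy j) ha.le hb.le hab)
    ⟨i, Finset.mem_univ _, (hf i).2 (hx i) (hy i) hi ha hb hab⟩

def entTerm (θ τ x : ℝ) : ℝ := θ * x + τ * (x * Real.log x)

lemma strictConvexOn_entTerm (θ : ℝ) {τ : ℝ} (hτ : 0 < τ) :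
    StrictConvexOn ℝ (Set.Ici 0) (entTerm θ τ) := by
  refine ⟨convex_Ici 0, fun x hx y hy hxy a b ha hb hab => ?_⟩
  have := mul_lt_mul_of_pos_left (Real.strictConvexOn_mul_log.2 hx hy hxy ha hb hab) hτ
  simp only [entTerm, smul_eq_mul] at this ⊢
  linear_combination this

lemma entTerm_zero (θ τ : ℝ) : entTerm θ τ 0 = 0 := by
  simp [entTerm]

lemma entTerm_mul {t : ℝ} (ht : t ≠ 0) (θ τ y : ℝ) :
    entTerm θ τ (t * y) = t * entTerm θ τ y + τ * (t * y * Real.log t) := by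
  rcases eq_or_ne y 0 with rfl | hy
  · simp [entTerm]
  · rw [entTerm, entTerm, Real.log_mul ht hy]
    ring

lemma hasDerivAt_entTerm (θ τ : ℝ) {x : ℝ} (hx : x ≠ 0) :
    HasDerivAt (entTerm θ τ) (θ + τ * (Real.log x + 1)) x :=
  ((hasDerivAt_id x).const_mul θ).add ((Real.hasDerivAt_mul_log hx).const_mul τ) |>.congr_deriv
    (by ring)

variable {n : ℕ}

lemma entObj_eq_sum_entTerm (Θ : Matrix (Fin n) (Fin n) ℝ) (τ : ℝ) (M : Matrix (Fin n) (Fin n) ℝ) :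
    entObj Θ τ M = ∑ k, ∑ l, entTerm (Θ k l) τ (M k l) := by
  simp only [entObj, mdot, entTerm, Finset.sum_add_distrib, Finset.mul_sum]

lemma continuous_entObj (Θ : Matrix (Fin n) (Fin n) ℝ) (τ : ℝ) : Continuous (entObj Θ τ) := by
  simp only [funext (entObj_eq_sum_entTerm Θ τ), entTerm]
  fun_prop

lemma strictConvexOn_entObj (Θ : Matrix (Fin n) (Fin n) ℝ) {τ : ℝ} (hτ : 0 < τ) :
    StrictConvexOn ℝ {M | ∀ k l, 0 ≤ M k l} (entObj Θ τ) := by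
  rw [funext (entObj_eq_sum_entTerm Θ τ)]
  exact StrictConvexOn.sum_pi fun k =>
    StrictConvexOn.sum_pi fun l => strictConvexOn_entTerm (Θ k l) hτ

lemma convex_couplings (p q : Fin n → ℝ) : Convex ℝ (couplings p q) := by
  rintro M ⟨hM₀, hMr, hMc⟩ N ⟨hN₀, hNr, hNc⟩ a b ha hb hab
  refine ⟨fun k l => ?_, fun k => ?_, fun l => ?_⟩
  · simp only [Matrix.add_apply, Matrix.smul_apply, smul_eq_mul]
    exact add_nonneg (mul_nonneg ha (hM₀ k l)) (mul_nonneg hb (hN₀ k l))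
  · simp only [Matrix.add_apply, Matrix.smul_apply, smul_eq_mul, Finset.sum_add_distrib,
      ← Finset.mul_sum, hMr, hNr]
    linear_combination p k * hab
  · simp only [Matrix.add_apply, Matrix.smul_apply, smul_eq_mul, Finset.sum_add_distrib,
      ← Finset.mul_sum, hMc, hNc]
    linear_combination q l * hab

lemma isClosed_couplings (p q : Fin n → ℝ) : IsClosed (couplings p q) := by
  have hentry : ∀ k l, Continuous fun M : Matrix (Fin n) (Fin n) ℝ => M k l :=
    continuous_id.matrix_elem
  simp only [couplings, Set.ofPred_and, Set.ofPred_forall]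
  refine (isClosed_iInter fun k => isClosed_iInter fun l =>
    isClosed_le continuous_const (hentry k l)).inter (.inter ?_ ?_)
  · exact isClosed_iInter fun k =>
      isClosed_eq (continuous_finsetSum _ fun l _ => hentry k l) continuous_const
  · exact isClosed_iInter fun l =>
      isClosed_eq (continuous_finsetSum _ fun k _ => hentry k l) continuous_const

lemma isCompact_couplings (p q : Fin n → ℝ) : IsCompact (couplings p q) := by
  refine (isCompact_Icc (a := (0 : Fin n → Fin n → ℝ)) (b := fun k _ => p k)).of_isClosed_subset
    (isClosed_couplings p q) ?_
  rintro M ⟨hM₀, hMr, -⟩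
  refine ⟨fun k l => hM₀ k l, fun k l => ?_⟩
  change M k l ≤ p k
  rw [← hMr k]
  exact Finset.single_le_sum (fun j _ => hM₀ k j) (Finset.mem_univ l)

lemma vecMulVec_mem_couplings {p q : Fin n → ℝ} (hp : ∀ k, 0 ≤ p k) (hq : ∀ l, 0 ≤ q l)
    (hp₁ : ∑ k, p k = 1) (hq₁ : ∑ l, q l = 1) : vecMulVec p q ∈ couplings p q := by
  refine ⟨fun k l => mul_nonneg (hp k) (hq l), fun k => ?_, fun l => ?_⟩
  · simp [vecMulVec_apply, ← Finset.mul_sum, hq₁]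
  · simp [vecMulVec_apply, ← Finset.sum_mul, hp₁]

lemma entObj_convexComb_le_of_eq_zero {τ : ℝ} (hτ : 0 < τ) (Θ : Matrix (Fin n) (Fin n) ℝ)
    {M P : Matrix (Fin n) (Fin n) ℝ} (hM : ∀ k l, 0 ≤ M k l) (hP : ∀ k l, 0 ≤ P k l)
    {t : ℝ} (ht₀ : 0 < t) (ht₁ : t ≤ 1) {k₀ l₀ : Fin n} (hz : M k₀ l₀ = 0) :
    entObj Θ τ ((1 - t) • M + t • P) ≤
      (1 - t) * entObj Θ τ M + t * entObj Θ τ P + τ * (t * P k₀ l₀ * Real.log t) := by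
  have hterm : ∀ k l, entTerm (Θ k l) τ ((1 - t) * M k l + t * P k l) ≤
      (1 - t) * entTerm (Θ k l) τ (M k l) + t * entTerm (Θ k l) τ (P k l) +
        if k = k₀ ∧ l = l₀ then τ * (t * P k₀ l₀ * Real.log t) else 0 := by
    intro k l
    split_ifs with h
    · obtain ⟨rfl, rfl⟩ := h
      rw [hz, mul_zero, zero_add, entTerm_zero, entTerm_mul ht₀.ne']
      exact le_of_eq (by ring)
    · rw [add_zero]
      exact (strictConvexOn_entTerm (Θ k l) hτ).convexOn.2 (hM k l) (hP k l) (by linarith) ht₀.le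
        (by ring)
  simp only [entObj_eq_sum_entTerm, Matrix.add_apply, Matrix.smul_apply, smul_eq_mul]
  refine (Finset.sum_le_sum fun k _ => Finset.sum_le_sum fun l _ => hterm k l).trans_eq ?_
  simp [Finset.sum_add_distrib, Finset.mul_sum, ite_and]

lemma pos_of_isMinOn_entObj {τ : ℝ} (hτ : 0 < τ) (Θ : Matrix (Fin n) (Fin n) ℝ)
    {C : Set (Matrix (Fin n) (Fin n) ℝ)} (hC : Convex ℝ C) (hC₀ : ∀ N ∈ C, ∀ k l, 0 ≤ N k l)
    {P M : Matrix (Fin n) (Fin n) ℝ} (hP : P ∈ C) (hPpos : ∀ k l, 0 < P k l) (hM : M ∈ C)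
    (hmin : IsMinOn (entObj Θ τ) C M) (k l : Fin n) : 0 < M k l := by
  refine (hC₀ M hM k l).lt_of_ne' fun hz => ?_
  set c := entObj Θ τ P - entObj Θ τ M
  have hc : 0 ≤ c := sub_nonneg.2 (hmin hP)
  have hτP : 0 < τ * P k l := mul_pos hτ (hPpos k l)
  -- the entropy gain `τ t P log t` of the mixture beats the linear cost `t c` for this `t`
  set t := Real.exp (-(c + 1) / (τ * P k l))
  have ht₀ : 0 < t := Real.exp_pos _
  have ht₁ : t < 1 := Real.exp_lt_one_iff.2 (div_neg_of_neg_of_pos (by linarith) hτP)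
  have hlog : τ * (P k l * Real.log t) = -(c + 1) := by
    rw [Real.log_exp, ← mul_assoc, mul_div_cancel₀ _ hτP.ne']
  have hgain : τ * (t * P k l * Real.log t) = -(t * (c + 1)) := by
    linear_combination t * hlog
  have hmix := (hmin (hC hM hP (by linarith) ht₀.le (by ring))).trans
    (entObj_convexComb_le_of_eq_zero hτ Θ (hC₀ M hM) (hC₀ P hP) ht₀ ht₁.le hz)
  linarith

lemma hasDerivAt_entObj_add_smul (Θ : Matrix (Fin n) (Fin n) ℝ) (τ : ℝ)
    {M : Matrix (Fin n) (Fin n) ℝ} (hM : ∀ k l, 0 < M k l) (D : Matrix (Fin n) (Fin n) ℝ) :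
    HasDerivAt (fun t : ℝ => entObj Θ τ (M + t • D))
      (∑ k, ∑ l, (Θ k l + τ * (Real.log (M k l) + 1)) * D k l) 0 := by
  simp only [entObj_eq_sum_entTerm, Matrix.add_apply, Matrix.smul_apply, smul_eq_mul]
  refine HasDerivAt.fun_sum fun k _ => HasDerivAt.fun_sum fun l _ => ?_
  exact (hasDerivAt_entTerm (Θ k l) τ (hM k l).ne').comp_of_eq 0
    ((hasDerivAt_mul_const (D k l)).const_add (M k l)) (by ring)

lemma sum_sum_mul_eq_zero_of_isMinOn_entObj {τ : ℝ} (Θ : Matrix (Fin n) (Fin n) ℝ)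
    {p q : Fin n → ℝ} {M : Matrix (Fin n) (Fin n) ℝ} (hM : M ∈ couplings p q)
    (hmin : IsMinOn (entObj Θ τ) (couplings p q) M) (hpos : ∀ k l, 0 < M k l)
    {D : Matrix (Fin n) (Fin n) ℝ} (hDr : ∀ k, ∑ l, D k l = 0) (hDc : ∀ l, ∑ k, D k l = 0) :
    ∑ k, ∑ l, (Θ k l + τ * (Real.log (M k l) + 1)) * D k l = 0 := by
  have hnear : ∀ᶠ t : ℝ in 𝓝 0, ∀ k l, 0 < M k l + t * D k l :=
    eventually_all.2 fun k => eventually_all.2 fun l =>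
      continuousAt_const.eventually_lt
        (continuous_const.add (continuous_id.mul continuous_const)).continuousAt
        (by simpa using hpos k l)
  refine IsLocalMin.hasDerivAt_eq_zero ?_ (hasDerivAt_entObj_add_smul Θ τ hpos D)
  filter_upwards [hnear] with t ht
  have hmem : M + t • D ∈ couplings p q := by
    refine ⟨fun k l => (ht k l).le, fun k => ?_, fun l => ?_⟩
    · simp [Finset.sum_add_distrib, ← Finset.mul_sum, hDr, hM.2.1 k]
    · simp [Finset.sum_add_distrib, ← Finset.mul_sum, hDc, hM.2.2 l]
  simpa using hmin hmem

lemma exists_diagonal_scaling_of_isMinOn_entObj {τ : ℝ} (hτ : 0 < τ)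
    (Θ : Matrix (Fin n) (Fin n) ℝ) [Nonempty (Fin n)] {p q : Fin n → ℝ}
    {M : Matrix (Fin n) (Fin n) ℝ} (hM : M ∈ couplings p q)
    (hmin : IsMinOn (entObj Θ τ) (couplings p q) M) (hpos : ∀ k l, 0 < M k l) :
    ∃ v₁ v₂ : Fin n → ℝ, (∀ k, 0 < v₁ k) ∧ (∀ k, 0 < v₂ k) ∧
      M = diagonal v₁ * (Matrix.of fun k l => Real.exp (-Θ k l / τ)) * diagonal v₂ := by
  have hcross := cross_eq_of_forall_sum_sum_mul_eq_zero fun D hDr hDc =>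
    sum_sum_mul_eq_zero_of_isMinOn_entObj Θ hM hmin hpos hDr hDc
  obtain ⟨v₁, v₂, hv₁, hv₂, h⟩ := exists_diagonal_scaling_of_cross_eq
    (Matrix.of fun k l => Real.exp (-Θ k l / τ))
    (Matrix.of fun k l => Real.log (M k l) + Θ k l / τ) fun a a' b b' => by
      have := hcross a a' b b'
      simp only [of_apply]
      field_simp
      linarith
  refine ⟨v₁, v₂, hv₁, hv₂, .trans ?_ h⟩
  ext k l
  rw [of_apply, of_apply, of_apply, ← Real.exp_add, neg_div, add_neg_cancel_right,
    Real.exp_log (hpos k l)]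

theorem stmt17 (n : ℕ) (τ : ℝ) (hτ : 0 < τ) (Θ : Matrix (Fin n) (Fin n) ℝ)
    (μ1 μ2 : Fin n → ℝ) (h1 : μ1 ∈ Spos n) (h2 : μ2 ∈ Spos n) :
    ∃ Mbar ∈ couplings μ1 μ2,
      -- M̄ is a minimizer:
      (∀ M ∈ couplings μ1 μ2, entObj Θ τ Mbar ≤ entObj Θ τ M) ∧
      -- the minimizer is unique:
      (∀ M ∈ couplings μ1 μ2,
        (∀ M' ∈ couplings μ1 μ2, entObj Θ τ M ≤ entObj Θ τ M') → M = Mbar) ∧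
      -- M̄ has strictly positive entries:
      (∀ k l, 0 < Mbar k l) ∧
      -- diagonal scaling representation M̄ = Diag(v₁) K Diag(v₂), K = exp(−Θ/τ):
      ∃ v1 v2 : Fin n → ℝ, (∀ k, 0 < v1 k) ∧ (∀ k, 0 < v2 k) ∧
        Mbar = Matrix.diagonal v1 * (Matrix.of fun k l => Real.exp (-Θ k l / τ)) *
          Matrix.diagonal v2 ∧
        -- (v₁, v₂) is unique up to (λv₁, λ⁻¹v₂), λ > 0:
        ∀ w1 w2 : Fin n → ℝ, (∀ k, 0 < w1 k) → (∀ k, 0 < w2 k) →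
          Mbar = Matrix.diagonal w1 * (Matrix.of fun k l => Real.exp (-Θ k l / τ)) *
            Matrix.diagonal w2 →
          ∃ lam : ℝ, 0 < lam ∧ w1 = (fun k => lam * v1 k) ∧ w2 = fun k => v2 k / lam := by
  have : Nonempty (Fin n) :=
    Finset.univ_nonempty_iff.1 (Finset.nonempty_of_sum_ne_zero (h1.2 ▸ one_ne_zero))
  have hprod := vecMulVec_mem_couplings (fun k => (h1.1 k).le) (fun l => (h2.1 l).le) h1.2 h2.2
  obtain ⟨Mbar, hMbar, hmin⟩ := (isCompact_couplings μ1 μ2).exists_isMinOn ⟨_, hprod⟩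
    (continuous_entObj Θ τ).continuousOn
  have hpos := pos_of_isMinOn_entObj hτ Θ (convex_couplings μ1 μ2) (fun N hN => hN.1) hprod
    (fun k l => mul_pos (h1.1 k) (h2.1 l)) hMbar hmin
  have hunique : ∀ M ∈ couplings μ1 μ2, IsMinOn (entObj Θ τ) (couplings μ1 μ2) M → M = Mbar :=
    fun M hM hMmin => ((strictConvexOn_entObj Θ hτ).subset (fun N hN => hN.1)
      (convex_couplings μ1 μ2)).eq_of_isMinOn hMmin hmin hM hMbar
  obtain ⟨v1, v2, hv1, hv2, hrep⟩ :=
    exists_diagonal_scaling_of_isMinOn_entObj hτ Θ hMbar hmin hpos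
  refine ⟨Mbar, hMbar, hmin, hunique, hpos, v1, v2, hv1, hv2, hrep,
    fun w1 w2 hw1 hw2 hw => ?_⟩
  exact diagonal_scaling_unique (fun k l => (Real.exp_pos _).ne') hv1 hw1 (fun l => (hw2 l).ne')
    (hrep.symm.trans hw)
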